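/- Let H and H' be real Hilbert spaces, (φ_γ)_{γ∈Γ} an orthonormal basis of H, p ∈ [1,2], w = (w_γ)_{γ∈Γ} positive weights, and K : H → H' a bounded linear operator. Suppose there exist sequences (b_γ)_{γ∈Γ} and (B_γ)_{γ∈Γ} with 0 < b_γ and B_γ < ∞ for all γ, such that for all h ∈ H: Σ_γ b_γ |⟨h,φ_γ⟩|² ≤ ‖Kh‖² ≤ Σ_γ B_γ |⟨h,φ_γ⟩|². Define M(ε,ρ) = sup{ ‖h‖ : h ∈ H, ‖Kh‖ ≤ ε, |||h|||_{w,p} ≤ ρ } for ε, ρ > 0. Then: (a) for every γ ∈ Γ, M(ε,ρ) ≥ min(ρ·w_γ^{−1/p}, ε·B_γ^{−1/2}), so M(ε,ρ) ≥ sup_γ min(ρ·w_γ^{−1/p}, ε·B_γ^{−1/2}); and (b) for every partition Γ = Γ₁ ∪ Γ₂ into disjoint subsets, M(ε,ρ)² ≤ ε²/inf_{γ∈Γ₁} b_γ + ρ²/inf_{γ∈Γ₂} w_γ^{2/p}. -/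

import Mathlib

open scoped ENNReal

noncomputable def eNorm3 {H : Type*} [NormedAddCommGroup H] [InnerProductSpace ℝ H]
    {Γ : Type*} (b : HilbertBasis Γ ℝ H) (w : Γ → ℝ) (p : ℝ) (f : H) : ℝ≥0∞ :=
  (∑' γ, ENNReal.ofReal (w γ * |b.repr f γ| ^ p)) ^ (1 / p)

/-- The modulus of continuity of `K⁻¹` under the prior `|||·|||_{w,p} ≤ ρ`. -/
noncomputable def modCont {H H' : Type*} [NormedAddCommGroup H] [InnerProductSpace ℝ H]
    [NormedAddCommGroup H'] [InnerProductSpace ℝ H']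
    {Γ : Type*} (K : H →L[ℝ] H') (b : HilbertBasis Γ ℝ H) (w : Γ → ℝ) (p : ℝ)
    (ε ρ : ℝ) : ℝ≥0∞ :=
  ⨆ (h : H) (_ : ‖K h‖ ≤ ε ∧ eNorm3 b w p h ≤ ENNReal.ofReal ρ), ENNReal.ofReal ‖h‖

lemma aux_tsum_rpow_le {ι : Type*} (f : ι → ℝ≥0∞) {q : ℝ} (hq : 1 ≤ q) :
    ∑' i, f i ^ q ≤ (∑' i, f i) ^ q := by
  set S := ∑' i, f i with hSdef
  rcases eq_or_ne S ⊤ with hS | hS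
  · rw [hS, ENNReal.top_rpow_of_pos (by linarith)]
    exact le_top
  · calc ∑' i, f i ^ q ≤ ∑' i, f i * S ^ (q - 1) := by
          apply ENNReal.tsum_le_tsum
          intro i
          rcases eq_or_ne (f i) 0 with h0 | h0
          · simp [h0, ENNReal.zero_rpow_of_pos (by linarith : (0:ℝ) < q)]
          · have hfi : f i ≠ ⊤ := ne_top_of_le_ne_top hS (ENNReal.le_tsum i)
            have : f i ^ q = f i * f i ^ (q - 1) := by
              rw [show q = 1 + (q - 1) by ring, ENNReal.rpow_add _ _ h0 hfi,
                ENNReal.rpow_one]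
              ring_nf
            rw [this]
            exact mul_le_mul_right (ENNReal.rpow_le_rpow (ENNReal.le_tsum i) (by linarith)) _
      _ = S * S ^ (q - 1) := by rw [ENNReal.tsum_mul_right]
      _ = S ^ q := by
          rcases eq_or_ne S 0 with h0 | h0
          · simp [h0, ENNReal.zero_rpow_of_pos (by linarith : (0:ℝ) < q)]
          · rw [show q = 1 + (q - 1) by ring, ENNReal.rpow_add _ _ h0 hS, ENNReal.rpow_one]
            ring_nf

lemma aux_parseval {H : Type*} [NormedAddCommGroup H] [InnerProductSpace ℝ H]
    {Γ : Type*} (b : HilbertBasis Γ ℝ H) (h : H) :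
    ENNReal.ofReal (‖h‖ ^ 2) = ∑' γ, ENNReal.ofReal ((b.repr h γ) ^ 2) := by
  have hsum : Summable fun γ => (b.repr h γ) ^ 2 := by
    have := b.summable_inner_mul_inner h h
    refine this.congr fun γ => ?_
    symm
    rw [b.repr_apply_apply, real_inner_comm, sq]
  have htsum : ∑' γ, (b.repr h γ) ^ 2 = ‖h‖ ^ 2 := by
    have := b.tsum_inner_mul_inner h h
    rw [real_inner_self_eq_norm_sq] at this
    rw [← this]
    congr 1 with γ
    rw [b.repr_apply_apply, real_inner_comm, sq]
  rw [← htsum, ENNReal.ofReal_tsum_of_nonneg (fun γ => sq_nonneg _) hsum]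

lemma aux_subtype_le {ι : Type*} (s : Set ι) (g : ι → ℝ≥0∞) :
    ∑' (x : s), g x ≤ ∑' x, g x := by
  rw [tsum_subtype]
  exact ENNReal.tsum_le_tsum fun x => Set.indicator_le_self s g x

/-- Upper and lower bounds for the modulus of continuity of `K⁻¹` under a two-sided
frame-type bound `Σ b_γ |h_γ|² ≤ ‖Kh‖² ≤ Σ B_γ |h_γ|²`. -/
theorem modulus_of_continuity_bounds
    {H H' : Type*} [NormedAddCommGroup H] [InnerProductSpace ℝ H]
    [NormedAddCommGroup H'] [InnerProductSpace ℝ H']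
    {Γ : Type*} (b : HilbertBasis Γ ℝ H)
    (K : H →L[ℝ] H')
    (p : ℝ) (hp1 : 1 ≤ p) (hp2 : p ≤ 2)
    (w : Γ → ℝ) (hw : ∀ γ, 0 < w γ)
    (bseq Bseq : Γ → ℝ) (hb : ∀ γ, 0 < bseq γ) (hB : ∀ γ, 0 < Bseq γ)
    (hlow : ∀ h : H,
      (∑' γ, ENNReal.ofReal (bseq γ * (b.repr h γ) ^ 2)) ≤ ENNReal.ofReal (‖K h‖ ^ 2))
    (hup : ∀ h : H,
      ENNReal.ofReal (‖K h‖ ^ 2) ≤ ∑' γ, ENNReal.ofReal (Bseq γ * (b.repr h γ) ^ 2))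
    (ε ρ : ℝ) (hε : 0 < ε) (hρ : 0 < ρ) :
    (∀ γ : Γ,
      ENNReal.ofReal (min (ρ * (w γ) ^ (-(1 / p))) (ε * (Bseq γ) ^ (-(1 / 2) : ℝ)))
        ≤ modCont K b w p ε ρ) ∧
    ((⨆ γ : Γ,
        ENNReal.ofReal (min (ρ * (w γ) ^ (-(1 / p))) (ε * (Bseq γ) ^ (-(1 / 2) : ℝ))))
        ≤ modCont K b w p ε ρ) ∧
    (∀ Γ₁ Γ₂ : Set Γ, Γ₁ ∪ Γ₂ = Set.univ → Disjoint Γ₁ Γ₂ →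
      (modCont K b w p ε ρ) ^ 2 ≤
        ENNReal.ofReal (ε ^ 2) / (⨅ γ : Γ₁, ENNReal.ofReal (bseq γ)) +
        ENNReal.ofReal (ρ ^ 2) / (⨅ γ : Γ₂, ENNReal.ofReal ((w γ) ^ (2 / p)))) := by
  classical
  have hp0 : 0 < p := lt_of_lt_of_le one_pos hp1
  -- Part (a)
  have parta : ∀ γ : Γ,
      ENNReal.ofReal (min (ρ * (w γ) ^ (-(1 / p))) (ε * (Bseq γ) ^ (-(1 / 2) : ℝ)))
        ≤ modCont K b w p ε ρ := by
    intro γ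
    set c : ℝ := min (ρ * (w γ) ^ (-(1 / p))) (ε * (Bseq γ) ^ (-(1 / 2) : ℝ)) with hc
    have hc0 : 0 < c := lt_min (mul_pos hρ (Real.rpow_pos_of_pos (hw γ) _))
      (mul_pos hε (Real.rpow_pos_of_pos (hB γ) _))
    have hrepr : ∀ γ', b.repr (c • (b γ : H)) γ' = if γ' = γ then c else 0 := by
      intro γ'
      rw [map_smul, lp.coeFn_smul, Pi.smul_apply, b.repr_self, lp.single_apply]
      by_cases hγ : γ' = γ
      · simp [hγ]
      · simp [hγ]
    have hK : ‖K (c • (b γ : H))‖ ≤ ε := by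
      have hts : (∑' γ', ENNReal.ofReal (Bseq γ' * (b.repr (c • (b γ : H)) γ') ^ 2))
          = ENNReal.ofReal (Bseq γ * c ^ 2) := by
        rw [tsum_eq_single γ]
        · rw [hrepr γ, if_pos rfl]
        · intro γ' hne
          rw [hrepr γ', if_neg hne]
          simp
      have := hup (c • b γ)
      rw [hts] at this
      have h1 : ‖K (c • (b γ : H))‖ ^ 2 ≤ Bseq γ * c ^ 2 :=
        (ENNReal.ofReal_le_ofReal_iff (mul_nonneg (hB γ).le (sq_nonneg c))).mp this
      have h2 : Bseq γ * c ^ 2 ≤ ε ^ 2 := by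
        have hcle : c ≤ ε * (Bseq γ) ^ (-(1 / 2) : ℝ) := min_le_right _ _
        have hsq : c ^ 2 ≤ (ε * (Bseq γ) ^ (-(1 / 2) : ℝ)) ^ 2 :=
          pow_le_pow_left₀ hc0.le hcle 2
        have hBsq : ((Bseq γ) ^ (-(1 / 2) : ℝ)) ^ 2 = (Bseq γ)⁻¹ := by
          rw [← Real.rpow_natCast ((Bseq γ) ^ (-(1 / 2) : ℝ)) 2, ← Real.rpow_mul (hB γ).le]
          norm_num [Real.rpow_neg_one]
        rw [mul_pow, hBsq] at hsq
        calc Bseq γ * c ^ 2 ≤ Bseq γ * (ε ^ 2 * (Bseq γ)⁻¹) :=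
              mul_le_mul_of_nonneg_left hsq (hB γ).le
          _ = ε ^ 2 := by
              rw [mul_comm (ε ^ 2), ← mul_assoc, mul_inv_cancel₀ (hB γ).ne', one_mul]
      nlinarith [norm_nonneg (K (c • (b γ : H)))]
    have hN : eNorm3 b w p (c • (b γ : H)) ≤ ENNReal.ofReal ρ := by
      have hts : (∑' γ', ENNReal.ofReal (w γ' * |b.repr (c • (b γ : H)) γ'| ^ p))
          = ENNReal.ofReal (w γ * c ^ p) := by
        rw [tsum_eq_single γ]
        · rw [hrepr γ, if_pos rfl, abs_of_pos hc0]
        · intro γ' hne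
          rw [hrepr γ', if_neg hne]
          simp [Real.zero_rpow hp0.ne']
      rw [eNorm3, hts, ENNReal.ofReal_rpow_of_nonneg
        (mul_nonneg (hw γ).le (Real.rpow_nonneg hc0.le p)) (by positivity)]
      apply ENNReal.ofReal_le_ofReal
      rw [Real.mul_rpow (hw γ).le (Real.rpow_nonneg hc0.le p), ← Real.rpow_mul hc0.le,
        mul_one_div, div_self hp0.ne', Real.rpow_one]
      have hcle : c ≤ ρ * (w γ) ^ (-(1 / p)) := min_le_left _ _
      calc (w γ) ^ (1 / p) * c ≤ (w γ) ^ (1 / p) * (ρ * (w γ) ^ (-(1 / p))) :=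
            mul_le_mul_of_nonneg_left hcle (Real.rpow_nonneg (hw γ).le _)
        _ = ρ := by
            rw [mul_comm ρ, ← mul_assoc, ← Real.rpow_add (hw γ)]
            simp
    have hnorm : ‖c • (b γ : H)‖ = c := by
      rw [norm_smul, Real.norm_eq_abs, abs_of_pos hc0]
      have h1 : ‖(b γ : H)‖ = 1 := b.orthonormal.1 γ
      rw [h1, mul_one]
    calc ENNReal.ofReal c = ENNReal.ofReal ‖c • (b γ : H)‖ := by rw [hnorm]
      _ ≤ modCont K b w p ε ρ := le_iSup₂_of_le (c • (b γ : H)) ⟨hK, hN⟩ le_rfl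
  refine ⟨parta, iSup_le parta, ?_⟩
  -- Part (b)
  intro Γ₁ Γ₂ hu hd
  set RHS := ENNReal.ofReal (ε ^ 2) / (⨅ γ : Γ₁, ENNReal.ofReal (bseq γ)) +
      ENNReal.ofReal (ρ ^ 2) / (⨅ γ : Γ₂, ENNReal.ofReal ((w γ) ^ (2 / p))) with hRHS
  have key : ∀ h : H, ‖K h‖ ≤ ε → eNorm3 b w p h ≤ ENNReal.ofReal ρ →
      ENNReal.ofReal (‖h‖ ^ 2) ≤ RHS := by
    intro h h1 h2
    set f : Γ → ℝ≥0∞ := fun γ => ENNReal.ofReal ((b.repr h γ) ^ 2) with hf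
    have hsplit : ENNReal.ofReal (‖h‖ ^ 2) = (∑' (γ : Γ₁), f γ) + ∑' (γ : Γ₂), f γ := by
      rw [aux_parseval b h, ← ENNReal.summable.tsum_union_disjoint (f := f) hd ENNReal.summable,
        hu, tsum_univ]
    rw [hsplit, hRHS]
    gcongr
    · rw [ENNReal.le_div_iff_mul_le (Or.inr (by positivity)) (Or.inr ENNReal.ofReal_ne_top)]
      calc (∑' (γ : Γ₁), f γ) * (⨅ γ : Γ₁, ENNReal.ofReal (bseq γ))
          = ∑' (γ : Γ₁), f γ * (⨅ γ : Γ₁, ENNReal.ofReal (bseq γ)) := ENNReal.tsum_mul_right.symm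
        _ ≤ ∑' (γ : Γ₁), ENNReal.ofReal (bseq γ * (b.repr h γ) ^ 2) := by
            apply ENNReal.tsum_le_tsum
            intro γ
            calc f γ * (⨅ γ : Γ₁, ENNReal.ofReal (bseq γ))
                ≤ f γ * ENNReal.ofReal (bseq γ) := mul_le_mul_right (iInf_le _ γ) _
              _ = ENNReal.ofReal (bseq γ * (b.repr h γ) ^ 2) := by
                  rw [hf, ← ENNReal.ofReal_mul (sq_nonneg _), mul_comm]
        _ ≤ ∑' γ : Γ, ENNReal.ofReal (bseq γ * (b.repr h γ) ^ 2) := aux_subtype_le _ _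
        _ ≤ ENNReal.ofReal (‖K h‖ ^ 2) := hlow h
        _ ≤ ENNReal.ofReal (ε ^ 2) :=
            ENNReal.ofReal_le_ofReal (pow_le_pow_left₀ (norm_nonneg _) h1 2)
    · rw [ENNReal.le_div_iff_mul_le (Or.inr (by positivity)) (Or.inr ENNReal.ofReal_ne_top)]
      have hq : (1:ℝ) ≤ 2 / p := (one_le_div hp0).mpr hp2
      have hsum_le : (∑' γ, ENNReal.ofReal (w γ * |b.repr h γ| ^ p)) ≤
          (ENNReal.ofReal ρ) ^ p := by
        rw [eNorm3] at h2
        have := ENNReal.rpow_le_rpow h2 hp0.le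
        rwa [← ENNReal.rpow_mul, one_div_mul_cancel hp0.ne', ENNReal.rpow_one] at this
      calc (∑' (γ : Γ₂), f γ) * (⨅ γ : Γ₂, ENNReal.ofReal ((w γ) ^ (2 / p)))
          = ∑' (γ : Γ₂), f γ * (⨅ γ : Γ₂, ENNReal.ofReal ((w γ) ^ (2 / p))) :=
            ENNReal.tsum_mul_right.symm
        _ ≤ ∑' (γ : Γ₂), (ENNReal.ofReal (w γ * |b.repr h γ| ^ p)) ^ (2 / p : ℝ) := by
            apply ENNReal.tsum_le_tsum
            intro γ
            calc f γ * (⨅ γ : Γ₂, ENNReal.ofReal ((w γ) ^ (2 / p)))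
                ≤ f γ * ENNReal.ofReal ((w γ) ^ (2 / p)) := mul_le_mul_right (iInf_le _ γ) _
              _ = (ENNReal.ofReal (w γ * |b.repr h γ| ^ p)) ^ (2 / p : ℝ) := by
                  rw [hf, ENNReal.ofReal_rpow_of_nonneg
                    (mul_nonneg (hw γ).le (Real.rpow_nonneg (abs_nonneg _) _)) (by positivity),
                    ← ENNReal.ofReal_mul (sq_nonneg _)]
                  congr 1
                  rw [Real.mul_rpow (hw γ).le (Real.rpow_nonneg (abs_nonneg _) _),
                    ← Real.rpow_mul (abs_nonneg _),
                    show p * (2 / p) = (2:ℝ) by field_simp,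
                    show (2:ℝ) = ((2:ℕ):ℝ) by norm_num, Real.rpow_natCast, sq_abs]
                  ring
        _ ≤ ∑' γ : Γ, (ENNReal.ofReal (w γ * |b.repr h γ| ^ p)) ^ (2 / p : ℝ) :=
            aux_subtype_le _ _
        _ ≤ (∑' γ, ENNReal.ofReal (w γ * |b.repr h γ| ^ p)) ^ (2 / p : ℝ) :=
            aux_tsum_rpow_le _ hq
        _ ≤ ((ENNReal.ofReal ρ) ^ p) ^ (2 / p : ℝ) :=
            ENNReal.rpow_le_rpow hsum_le (by positivity)
        _ = ENNReal.ofReal (ρ ^ 2) := by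
            rw [← ENNReal.rpow_mul, show p * (2 / p) = (2:ℝ) by field_simp,
              ENNReal.ofReal_rpow_of_nonneg hρ.le (by norm_num), Real.rpow_two]
  have hmle : modCont K b w p ε ρ ≤ RHS ^ (1 / 2 : ℝ) := by
    rw [modCont]
    apply iSup₂_le
    intro h hh
    have hk := key h hh.1 hh.2
    have heq : ENNReal.ofReal ‖h‖ = (ENNReal.ofReal (‖h‖ ^ 2)) ^ (1 / 2 : ℝ) := by
      rw [ENNReal.ofReal_rpow_of_nonneg (by positivity) (by norm_num)]
      congr 1
      rw [← Real.rpow_natCast ‖h‖ 2, ← Real.rpow_mul (norm_nonneg _)]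
      norm_num
    rw [heq]
    exact ENNReal.rpow_le_rpow hk (by norm_num)
  calc modCont K b w p ε ρ ^ 2 = modCont K b w p ε ρ ^ ((2:ℕ):ℝ) :=
        (ENNReal.rpow_natCast _ 2).symm
    _ ≤ (RHS ^ (1 / 2 : ℝ)) ^ ((2:ℕ):ℝ) := by
        exact ENNReal.rpow_le_rpow hmle (by norm_num)
    _ = RHS := by
        rw [← ENNReal.rpow_mul]
        norm_num
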